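/- Consider the 9-dimensional Lie algebra L_{9,63} = sl(2,R) ⋉ 6L_1 with nonzero brackets [X_1,X_2]=2X_2, [X_1,X_3]=−2X_3, [X_2,X_3]=X_1, [X_1,X_4]=X_4, [X_1,X_5]=−X_5, [X_1,X_6]=X_6, [X_1,X_7]=−X_7, [X_1,X_8]=X_8, [X_1,X_9]=−X_9, [X_2,X_5]=X_4, [X_2,X_7]=X_6, [X_2,X_9]=X_8, [X_3,X_4]=X_5, [X_3,X_6]=X_7, [X_3,X_8]=X_9. Then the functions I_1 = x_4 x_7 − x_5 x_6, I_2 = x_4 x_9 − x_5 x_8, I_3 = x_6 x_9 − x_7 x_8 satisfy \hat{X}_i(I_m) = 0 for all i = 1,...,9 and m = 1,2,3. -/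

import Mathlib

open Finset

noncomputable def Xhat (C : Fin 9 → Fin 9 → Fin 9 → ℝ) (i : Fin 9)
    (F : (Fin 9 → ℝ) → ℝ) : (Fin 9 → ℝ) → ℝ :=
  fun x => ∑ j : Fin 9, (∑ k : Fin 9, C i j k * x k) * fderiv ℝ F x (Pi.single j 1)

noncomputable def Lhalf : Fin 9 → Fin 9 → Fin 9 → ℝ := fun i j k =>
  if (i, j, k) = ((0 : Fin 9), (1 : Fin 9), (1 : Fin 9)) then (2 : ℝ) else
  if (i, j, k) = ((0 : Fin 9), (2 : Fin 9), (2 : Fin 9)) then (-2 : ℝ) else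
  if (i, j, k) = ((1 : Fin 9), (2 : Fin 9), (0 : Fin 9)) then (1 : ℝ) else
  if (i, j, k) = ((0 : Fin 9), (3 : Fin 9), (3 : Fin 9)) then (1 : ℝ) else
  if (i, j, k) = ((0 : Fin 9), (4 : Fin 9), (4 : Fin 9)) then (-1 : ℝ) else
  if (i, j, k) = ((0 : Fin 9), (5 : Fin 9), (5 : Fin 9)) then (1 : ℝ) else
  if (i, j, k) = ((0 : Fin 9), (6 : Fin 9), (6 : Fin 9)) then (-1 : ℝ) else
  if (i, j, k) = ((0 : Fin 9), (7 : Fin 9), (7 : Fin 9)) then (1 : ℝ) else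
  if (i, j, k) = ((0 : Fin 9), (8 : Fin 9), (8 : Fin 9)) then (-1 : ℝ) else
  if (i, j, k) = ((1 : Fin 9), (4 : Fin 9), (3 : Fin 9)) then (1 : ℝ) else
  if (i, j, k) = ((1 : Fin 9), (6 : Fin 9), (5 : Fin 9)) then (1 : ℝ) else
  if (i, j, k) = ((1 : Fin 9), (8 : Fin 9), (7 : Fin 9)) then (1 : ℝ) else
  if (i, j, k) = ((2 : Fin 9), (3 : Fin 9), (4 : Fin 9)) then (1 : ℝ) else
  if (i, j, k) = ((2 : Fin 9), (5 : Fin 9), (6 : Fin 9)) then (1 : ℝ) else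
  if (i, j, k) = ((2 : Fin 9), (7 : Fin 9), (8 : Fin 9)) then (1 : ℝ) else
  0

noncomputable def C (i j k : Fin 9) : ℝ := Lhalf i j k - Lhalf j i k

noncomputable def I₁ : (Fin 9 → ℝ) → ℝ := fun x => x 3 * x 6 - x 4 * x 5
noncomputable def I₂ : (Fin 9 → ℝ) → ℝ := fun x => x 3 * x 8 - x 4 * x 7
noncomputable def I₃ : (Fin 9 → ℝ) → ℝ := fun x => x 5 * x 8 - x 6 * x 7


lemma hder (a b c d : Fin 9) (x v : Fin 9 → ℝ) :
    fderiv ℝ (fun x : Fin 9 → ℝ => x a * x b - x c * x d) x v =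
      v a * x b + x a * v b - (v c * x d + x c * v d) := by
  have ha := hasFDerivAt_apply (𝕜 := ℝ) a x
  have hb := hasFDerivAt_apply (𝕜 := ℝ) b x
  have hc := hasFDerivAt_apply (𝕜 := ℝ) c x
  have hd := hasFDerivAt_apply (𝕜 := ℝ) d x
  have h : HasFDerivAt (fun x : Fin 9 → ℝ => x a * x b - x c * x d) _ x := (ha.mul hb).sub (hc.mul hd)
  rw [h.fderiv]
  simp [ContinuousLinearMap.proj_apply, smul_eq_mul]
  ring

lemma sum_univ_nine' (f : Fin 9 → ℝ) :
    ∑ i, f i = f 0 + f 1 + f 2 + f 3 + f 4 + f 5 + f 6 + f 7 + f 8 := by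
  rw [Fin.sum_univ_castSucc, Fin.sum_univ_eight]; rfl

set_option maxHeartbeats 4000000 in
theorem invariants_L9_63 :
    ∀ (i : Fin 9) (x : Fin 9 → ℝ),
      Xhat C i I₁ x = 0 ∧ Xhat C i I₂ x = 0 ∧ Xhat C i I₃ x = 0 := by
  intro i x
  refine ⟨?_, ?_, ?_⟩
  · show (∑ j : Fin 9, (∑ k : Fin 9, C i j k * x k) * fderiv ℝ (fun x : Fin 9 → ℝ => x 3 * x 6 - x 4 * x 5) x (Pi.single j 1)) = 0
    simp only [hder]
    rw [sum_univ_nine']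
    simp (config := {decide := true}) [Pi.single_apply]
    simp only [sum_univ_nine']
    fin_cases i <;> · simp (config := {decide := true}) [C, Lhalf]; try ring
  · show (∑ j : Fin 9, (∑ k : Fin 9, C i j k * x k) * fderiv ℝ (fun x : Fin 9 → ℝ => x 3 * x 8 - x 4 * x 7) x (Pi.single j 1)) = 0
    simp only [hder]
    rw [sum_univ_nine']
    simp (config := {decide := true}) [Pi.single_apply]
    simp only [sum_univ_nine']
    fin_cases i <;> · simp (config := {decide := true}) [C, Lhalf]; try ring
  · show (∑ j : Fin 9, (∑ k : Fin 9, C i j k * x k) * fderiv ℝ (fun x : Fin 9 → ℝ => x 5 * x 8 - x 6 * x 7) x (Pi.single j 1)) = 0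
    simp only [hder]
    rw [sum_univ_nine']
    simp (config := {decide := true}) [Pi.single_apply]
    simp only [sum_univ_nine']
    fin_cases i <;> · simp (config := {decide := true}) [C, Lhalf]; try ring
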